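/- arXiv:math/0611371 — 2 statements merged into one kernel-verified Lean document; each statement's English description precedes it below -/
import Mathlib

section
/- The multiplication map by g^k on double forms, sending ω ∈ D^{p,q} to g^k·ω ∈ D^{p+k,q+k}, is injective whenever p + q + k < n + 1, where n is the dimension of the underlying Euclidean vector space. -/
open scoped BigOperators

noncomputable section

/-- `V n` is the standard `n`-dimensional Euclidean vector space. -/
abbrev V (n : ℕ) := EuclideanSpace ℝ (Fin n)

/-- A (raw) double form of bidegree `(p,q)`: a real-valued function of a `p`-tuple and a
`q`-tuple of vectors.  Genuine double forms (elements of `Λ^p V* ⊗ Λ^q V*`) are singled out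
by the predicate `IsDF` below. -/
abbrev DF (n p q : ℕ) := (Fin p → V n) → (Fin q → V n) → ℝ

/-- standard orthonormal basis of `V n`. -/
def stdB {n : ℕ} (i : Fin n) : V n := EuclideanSpace.single i 1

/-- The exterior (Kulkarni–Nomizu) product of double forms. -/
def KN {n p q r s : ℕ} (ω₁ : DF n p q) (ω₂ : DF n r s) : DF n (p + r) (q + s) :=
  fun x y =>
    (1 / ((p.factorial * q.factorial * r.factorial * s.factorial : ℕ) : ℝ)) *
      ∑ σ : Equiv.Perm (Fin (p + r)), ∑ ρ : Equiv.Perm (Fin (q + s)),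
        ((Equiv.Perm.sign σ : ℤ) : ℝ) * ((Equiv.Perm.sign ρ : ℤ) : ℝ) *
          ω₁ (fun i => x (σ (Fin.castAdd r i))) (fun j => y (ρ (Fin.castAdd s j))) *
          ω₂ (fun i => x (σ (Fin.natAdd p i))) (fun j => y (ρ (Fin.natAdd q j)))

/-- The metric, viewed as a `(1,1)` double form. -/
def gF (n : ℕ) : DF n 1 1 := fun x y => (inner ℝ (x 0) (y 0) : ℝ)

/-- `k`-th power of the metric in the algebra of double forms. -/
def gpow (n : ℕ) : (k : ℕ) → DF n k k
  | 0 => fun _ _ => 1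
  | k + 1 => KN (gpow n k) (gF n)

/-- Multiplication by `g^k` on double forms. -/
def gmulIter {n p q : ℕ} : (k : ℕ) → DF n p q → DF n (p + k) (q + k)
  | 0, ω => ω
  | k + 1, ω => KN (p := p + k) (q := q + k) (gmulIter k ω) (gF n)

/-- The contraction map `c : D^{p+1,q+1} → D^{p,q}`. -/
def contr {n p q : ℕ} (ω : DF n (p + 1) (q + 1)) : DF n p q :=
  fun x y => ∑ i : Fin n, ω (Fin.cons (stdB i) x) (Fin.cons (stdB i) y)

/-- Iterated contraction `c^k : D^{p+k,q+k} → D^{p,q}`. -/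
def contrIter {n : ℕ} : (k : ℕ) → {p q : ℕ} → DF n (p + k) (q + k) → DF n p q
  | 0, _, _, ω => ω
  | k + 1, _, _, ω => contrIter k (contr ω)

/-- Contraction in the form `D^{p,q} → D^{p-1,q-1}` (zero in degenerate degrees). -/
def contrA {n p q : ℕ} (ω : DF n p q) : DF n (p - 1) (q - 1) :=
  if h : 1 ≤ p ∧ 1 ≤ q then
    fun x y => ∑ i : Fin n,
      ω ((Fin.cons (stdB i) x) ∘ Fin.cast (by omega)) ((Fin.cons (stdB i) y) ∘ Fin.cast (by omega))
  else fun _ _ => 0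

/-- Reindexing a double form along equalities of degrees. -/
def reIx {n p q : ℕ} (p' q' : ℕ) (h1 : p = p') (h2 : q = q') (ω : DF n p q) : DF n p' q' :=
  fun x y => ω (x ∘ Fin.cast h1) (y ∘ Fin.cast h2)

/-- The natural inner product on double forms of bidegree `(p,q)`. -/
def innerDF {n p q : ℕ} (ω θ : DF n p q) : ℝ :=
  (1 / ((p.factorial * q.factorial : ℕ) : ℝ)) *
    ∑ i : Fin p → Fin n, ∑ j : Fin q → Fin n,
      ω (fun a => stdB (i a)) (fun b => stdB (j b)) *
        θ (fun a => stdB (i a)) (fun b => stdB (j b))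

/-- determinant of the matrix whose first `p` columns are basis vectors `e_{i a}` and whose
remaining columns are the vectors `x b`; used to define the generalized Hodge star. -/
def extDet {n p p' : ℕ} (i : Fin p → Fin n) (x : Fin p' → V n) : ℝ :=
  Matrix.det (Matrix.of fun (r c : Fin n) =>
    if h : (c : ℕ) < p then (inner ℝ (stdB (i ⟨c, h⟩)) (stdB r) : ℝ)
    else if h2 : (c : ℕ) - p < p' then (inner ℝ (x ⟨(c : ℕ) - p, h2⟩) (stdB r) : ℝ)
    else 0)

/-- The generalized Hodge star operator on double forms, with explicit target bidegree
`(p',q')` (the geometrically meaningful case being `p' = n - p`, `q' = n - q`). -/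
def hodge {n : ℕ} (p' q' : ℕ) {p q : ℕ} (ω : DF n p q) : DF n p' q' :=
  fun x y =>
    (1 / ((p.factorial * q.factorial : ℕ) : ℝ)) *
      ∑ i : Fin p → Fin n, ∑ j : Fin q → Fin n,
        ω (fun a => stdB (i a)) (fun b => stdB (j b)) * extDet i x * extDet j y

/-- `ω` is a genuine double form: it is multilinear and alternating in the first `p`
arguments and in the last `q` arguments. -/
def IsDF {n p q : ℕ} (ω : DF n p q) : Prop :=
  ∃ A : AlternatingMap ℝ (V n) (AlternatingMap ℝ (V n) ℝ (Fin q)) (Fin p),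
    ∀ x y, ω x y = A x y

/-- symmetric double form of bidegree `(p,p)`. -/
def IsSymmDF {n p : ℕ} (ω : DF n p p) : Prop := ∀ x y, ω x y = ω y x

/-- The first Bianchi identity for a `(p,q)` double form. -/
def FB {n p q : ℕ} (ω : DF n p q) : Prop :=
  ∀ (hq : 1 ≤ q) (x : Fin (p + 1) → V n) (y : Fin (q - 1) → V n),
    ∑ j : Fin (p + 1), ((-1 : ℝ)) ^ (j : ℕ) *
      ω (j.removeNth x) ((Fin.cons (x j) y) ∘ Fin.cast (by omega)) = 0

/-- `q`-th Kulkarni–Nomizu power of a `(2,2)` double form. -/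
def knpow {n : ℕ} : (q : ℕ) → DF n 2 2 → DF n (2 * q) (2 * q)
  | 0, _ => fun _ _ => 1
  | q + 1, R => KN (knpow q R) R

/-- Full contraction of a `(m,m)` double form. -/
def fullContr {n m : ℕ} (ω : DF n m m) : ℝ :=
  contrIter m (reIx (0 + m) (0 + m) (by omega) (by omega) ω) Fin.elim0 Fin.elim0

/-- The Weitzenböck curvature operator of degree `p` built from a curvature tensor `R`. -/
def weitz {n : ℕ} (p : ℕ) (R : DF n 2 2) : DF n (2 + (p - 2)) (2 + (p - 2)) :=
  fun x y => (1 / ((p - 2).factorial : ℝ)) *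
    KN (((fun u w => (1 / ((p - 1 : ℕ) : ℝ)) * KN (gF n) (contrA R) u w - 2 * R u w) : DF n 2 2))
      (gpow n (p - 2)) x y

namespace S1

open Equiv Finset

variable {n : ℕ}

abbrev T (n p q : ℕ) := (Fin p → Fin n) → (Fin q → Fin n) → ℝ

noncomputable def sg {m : ℕ} (σ : Equiv.Perm (Fin m)) : ℝ := ((Equiv.Perm.sign σ : ℤ) : ℝ)

lemma sg_eq_or {m : ℕ} (σ : Perm (Fin m)) : sg σ = 1 ∨ sg σ = -1 := by
  rcases Int.units_eq_one_or (Equiv.Perm.sign σ) with h | h <;> simp [sg, h]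

lemma sg_sq {m : ℕ} (σ : Perm (Fin m)) : sg σ * sg σ = 1 := by
  rcases sg_eq_or σ with h | h <;> rw [h] <;> norm_num

lemma sg_mul {m : ℕ} (σ τ : Perm (Fin m)) : sg (σ * τ) = sg σ * sg τ := by
  simp [sg]

def pex {p : ℕ} (τ : Perm (Fin p)) : Perm (Fin (p+1)) :=
  finSumFinEquiv.permCongr (Equiv.sumCongr τ (Equiv.refl (Fin 1)))

lemma last_eq_natAdd (p : ℕ) : Fin.last p = Fin.natAdd p (0 : Fin 1) := by
  ext; simp

lemma pex_castSucc {p : ℕ} (τ : Perm (Fin p)) (s : Fin p) :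
    pex τ (Fin.castSucc s) = Fin.castSucc (τ s) := by
  show finSumFinEquiv ((Equiv.sumCongr τ (Equiv.refl (Fin 1))) (finSumFinEquiv.symm (Fin.castAdd 1 s))) = _
  rw [finSumFinEquiv_symm_apply_castAdd]
  simp
  rfl

lemma pex_last {p : ℕ} (τ : Perm (Fin p)) : pex τ (Fin.last p) = Fin.last p := by
  rw [last_eq_natAdd]
  show finSumFinEquiv ((Equiv.sumCongr τ (Equiv.refl (Fin 1))) (finSumFinEquiv.symm (Fin.natAdd p 0))) = _
  rw [finSumFinEquiv_symm_apply_natAdd]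
  simp

lemma sg_pex {p : ℕ} (τ : Perm (Fin p)) : sg (pex τ) = sg τ := by
  simp [sg, pex, Equiv.Perm.sign_permCongr, Equiv.Perm.sign_sumCongr]

def dec (p : ℕ) : Fin (p+1) × Perm (Fin p) → Perm (Fin (p+1)) :=
  fun ml => Equiv.swap ml.1 (Fin.last p) * pex ml.2

lemma dec_castSucc (p : ℕ) (m : Fin (p+1)) (τ : Perm (Fin p)) (s : Fin p) :
    dec p (m, τ) (Fin.castSucc s) = Equiv.swap m (Fin.last p) (Fin.castSucc (τ s)) := by
  simp [dec, Equiv.Perm.mul_apply, pex_castSucc]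

lemma dec_last (p : ℕ) (m : Fin (p+1)) (τ : Perm (Fin p)) :
    dec p (m, τ) (Fin.last p) = m := by
  simp [dec, Equiv.Perm.mul_apply, pex_last, Equiv.swap_apply_right]

lemma sg_dec (p : ℕ) (m : Fin (p+1)) (τ : Perm (Fin p)) :
    sg (dec p (m, τ)) = sg (Equiv.swap m (Fin.last p)) * sg τ := by
  rw [dec, sg_mul, sg_pex]

lemma dec_bij (p : ℕ) : Function.Bijective (dec p) := by
  rw [Fintype.bijective_iff_injective_and_card]
  constructor
  · rintro ⟨m, τ⟩ ⟨m', τ'⟩ h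
    have hm : m = m' := by
      have h1 := congrArg (fun σ => σ (Fin.last p)) h
      simpa [dec_last] using h1
    subst hm
    have hτ : τ = τ' := by
      apply Equiv.ext
      intro s
      have h1 := congrArg (fun σ => σ (Fin.castSucc s)) h
      simp only [dec_castSucc] at h1
      have h2 := (Equiv.swap m (Fin.last p)).injective h1
      exact Fin.castSucc_injective _ h2
    rw [hτ]
  · simp [Fintype.card_perm, Nat.factorial_succ]


noncomputable def Gm {p q : ℕ} (M : T n p q) : T n (p+1) (q+1) := fun i j =>
  (1 / ((p.factorial * q.factorial : ℕ) : ℝ)) *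
    ∑ σ : Perm (Fin (p+1)), ∑ ρ : Perm (Fin (q+1)),
      sg σ * sg ρ *
        M (fun s => i (σ (Fin.castSucc s))) (fun s => j (ρ (Fin.castSucc s))) *
        (if i (σ (Fin.last p)) = j (ρ (Fin.last q)) then 1 else 0)

def Sg {p q : ℕ} (M : T n p q) : Prop :=
  ∀ (σ : Perm (Fin p)) (ρ : Perm (Fin q)) (i : Fin p → Fin n) (j : Fin q → Fin n),
    M (fun s => i (σ s)) (fun s => j (ρ s)) = sg σ * sg ρ * M i j

lemma GmAlt {p q : ℕ} (M : T n p q) (hM : Sg M) (i : Fin (p+1) → Fin n) (j : Fin (q+1) → Fin n) :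
    Gm M i j = ∑ m : Fin (p+1), ∑ l : Fin (q+1),
      sg (Equiv.swap m (Fin.last p)) * sg (Equiv.swap l (Fin.last q)) *
        M (fun s => i (Equiv.swap m (Fin.last p) (Fin.castSucc s)))
          (fun s => j (Equiv.swap l (Fin.last q) (Fin.castSucc s))) *
        (if i m = j l then 1 else 0) := by
  have h1 : ∀ (G : Perm (Fin (p+1)) → ℝ),
      ∑ σ, G σ = ∑ ml : Fin (p+1) × Perm (Fin p), G (dec p ml) :=
    fun G => (Fintype.sum_bijective (dec p) (dec_bij p) _ G (fun _ => rfl)).symm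
  have h2 : ∀ (G : Perm (Fin (q+1)) → ℝ),
      ∑ ρ, G ρ = ∑ ml : Fin (q+1) × Perm (Fin q), G (dec q ml) :=
    fun G => (Fintype.sum_bijective (dec q) (dec_bij q) _ G (fun _ => rfl)).symm
  unfold Gm
  rw [h1]
  rw [Fintype.sum_prod_type]
  have hmain : ∀ m : Fin (p+1), ∀ τ : Perm (Fin p),
      (∑ ρ : Perm (Fin (q+1)), sg (dec p (m, τ)) * sg ρ *
        M (fun s => i (dec p (m, τ) (Fin.castSucc s))) (fun s => j (ρ (Fin.castSucc s))) *
        (if i (dec p (m, τ) (Fin.last p)) = j (ρ (Fin.last q)) then 1 else 0))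
      = ∑ l : Fin (q+1), ∑ π : Perm (Fin q), sg (dec p (m, τ)) * sg (dec q (l, π)) *
        M (fun s => i (dec p (m, τ) (Fin.castSucc s))) (fun s => j (dec q (l, π) (Fin.castSucc s))) *
        (if i (dec p (m, τ) (Fin.last p)) = j (dec q (l, π) (Fin.last q)) then 1 else 0) := by
    intro m τ
    rw [h2, Fintype.sum_prod_type]
  simp only [hmain]
  -- now per (m, τ, l, π) rewrite the term
  have hterm : ∀ (m : Fin (p+1)) (τ : Perm (Fin p)) (l : Fin (q+1)) (π : Perm (Fin q)),
      sg (dec p (m, τ)) * sg (dec q (l, π)) *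
        M (fun s => i (dec p (m, τ) (Fin.castSucc s))) (fun s => j (dec q (l, π) (Fin.castSucc s))) *
        (if i (dec p (m, τ) (Fin.last p)) = j (dec q (l, π) (Fin.last q)) then 1 else 0)
      = (sg τ * sg τ) * (sg π * sg π) *
        (sg (Equiv.swap m (Fin.last p)) * sg (Equiv.swap l (Fin.last q)) *
          M (fun s => i (Equiv.swap m (Fin.last p) (Fin.castSucc s)))
            (fun s => j (Equiv.swap l (Fin.last q) (Fin.castSucc s))) *
          (if i m = j l then 1 else 0)) := by
    intro m τ l π
    rw [sg_dec, sg_dec, dec_last, dec_last]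
    have harg : M (fun s => i (dec p (m, τ) (Fin.castSucc s)))
        (fun s => j (dec q (l, π) (Fin.castSucc s)))
      = sg τ * sg π *
        M (fun s => i (Equiv.swap m (Fin.last p) (Fin.castSucc s)))
          (fun s => j (Equiv.swap l (Fin.last q) (Fin.castSucc s))) := by
      have := hM τ π (fun s => i (Equiv.swap m (Fin.last p) (Fin.castSucc s)))
        (fun s => j (Equiv.swap l (Fin.last q) (Fin.castSucc s)))
      simp only [dec_castSucc]
      exact this
    rw [harg]
    ring
  simp only [hterm]
  -- collapse the τ, π sums
  have hconst : ∀ (m : Fin (p+1)) (l : Fin (q+1)) (c : ℝ),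
      (∑ τ : Perm (Fin p), ∑ π : Perm (Fin q), (sg τ * sg τ) * (sg π * sg π) * c)
      = ((p.factorial * q.factorial : ℕ) : ℝ) * c := by
    intro m l c
    have : ∀ τ : Perm (Fin p), ∑ π : Perm (Fin q), (sg τ * sg τ) * (sg π * sg π) * c
        = (q.factorial : ℝ) * c := by
      intro τ
      rw [sg_sq τ]
      have : ∀ π : Perm (Fin q), (1 : ℝ) * (sg π * sg π) * c = c := by
        intro π; rw [sg_sq π]; ring
      simp only [this, Finset.sum_const, card_univ, Fintype.card_perm, Fintype.card_fin,
        nsmul_eq_mul]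
    simp only [this, Finset.sum_const, card_univ, Fintype.card_perm, Fintype.card_fin,
      nsmul_eq_mul]
    push_cast
    ring
  -- reorder: ∑ m ∑ τ ∑ l ∑ π  =  ∑ m ∑ l ∑ τ ∑ π
  have hcomm : ∀ m : Fin (p+1),
      (∑ τ : Perm (Fin p), ∑ l : Fin (q+1), ∑ π : Perm (Fin q),
        (sg τ * sg τ) * (sg π * sg π) *
        (sg (Equiv.swap m (Fin.last p)) * sg (Equiv.swap l (Fin.last q)) *
          M (fun s => i (Equiv.swap m (Fin.last p) (Fin.castSucc s)))
            (fun s => j (Equiv.swap l (Fin.last q) (Fin.castSucc s))) *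
          (if i m = j l then 1 else 0)))
      = ∑ l : Fin (q+1), ((p.factorial * q.factorial : ℕ) : ℝ) *
        (sg (Equiv.swap m (Fin.last p)) * sg (Equiv.swap l (Fin.last q)) *
          M (fun s => i (Equiv.swap m (Fin.last p) (Fin.castSucc s)))
            (fun s => j (Equiv.swap l (Fin.last q) (Fin.castSucc s))) *
          (if i m = j l then 1 else 0)) := by
    intro m
    rw [Finset.sum_comm]
    exact Finset.sum_congr rfl (fun l _ => hconst m l _)
  simp only [hcomm]
  simp only [← Finset.mul_sum]
  have hfac : ((p.factorial * q.factorial : ℕ) : ℝ) ≠ 0 := by positivity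
  rw [← mul_assoc, one_div, inv_mul_cancel₀ hfac, one_mul]


noncomputable def Ct {p q : ℕ} (M : T n (p+1) (q+1)) : T n p q := fun i j =>
  ∑ t : Fin n, M (Fin.snoc i t) (Fin.snoc j t)

noncomputable def Xc {p q : ℕ} (M : T n p q) : T n p q := fun i j =>
  ∑ m : Fin p, ∑ l : Fin q,
    if i m = j l then (∑ t : Fin n, M (Function.update i m t) (Function.update j l t)) else 0

lemma sg_one {m : ℕ} : sg (1 : Perm (Fin m)) = 1 := by simp [sg]

lemma sg_swap_self {m : ℕ} (a : Fin m) : sg (Equiv.swap a a) = 1 := by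
  rw [Equiv.swap_self]; exact sg_one

lemma sg_swap_ne {m : ℕ} {a b : Fin m} (h : a ≠ b) : sg (Equiv.swap a b) = -1 := by
  simp [sg, Equiv.Perm.sign_swap h]

lemma Sg_Gm {p q : ℕ} (M : T n p q) : Sg (Gm M) := by
  intro σ ρ i j
  have h1 : ∀ (G : Perm (Fin (p+1)) → ℝ), ∑ x, G x = ∑ x, G (σ * x) :=
    fun G => (Equiv.sum_comp (Equiv.mulLeft σ) G).symm
  have h2 : ∀ (G : Perm (Fin (q+1)) → ℝ), ∑ x, G x = ∑ x, G (ρ * x) :=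
    fun G => (Equiv.sum_comp (Equiv.mulLeft ρ) G).symm
  set G : Perm (Fin (p+1)) → Perm (Fin (q+1)) → ℝ := fun a b =>
    sg a * sg b * M (fun s => i (σ (a (Fin.castSucc s)))) (fun s => j (ρ (b (Fin.castSucc s)))) *
      (if i (σ (a (Fin.last p))) = j (ρ (b (Fin.last q))) then 1 else 0) with hG
  set H : Perm (Fin (p+1)) → Perm (Fin (q+1)) → ℝ := fun a b =>
    sg a * sg b * M (fun s => i (a (Fin.castSucc s))) (fun s => j (b (Fin.castSucc s))) *
      (if i (a (Fin.last p)) = j (b (Fin.last q)) then 1 else 0) with hH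
  have hL : Gm M (fun s => i (σ s)) (fun s => j (ρ s))
      = (1 / ((p.factorial * q.factorial : ℕ) : ℝ)) * ∑ a, ∑ b, G a b := rfl
  have hR : Gm M i j = (1 / ((p.factorial * q.factorial : ℕ) : ℝ)) * ∑ a, ∑ b, H a b := rfl
  have hHG : ∀ a b, H (σ * a) (ρ * b) = (sg σ * sg ρ) * G a b := by
    intro a b
    simp only [hH, hG, Equiv.Perm.mul_apply, sg_mul]
    rw [show sg σ * sg a * (sg ρ * sg b) = sg σ * sg ρ * (sg a * sg b) by ring]
    simp only [mul_assoc]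
    rfl
  have hsum : ∑ a, ∑ b, H a b = (sg σ * sg ρ) * ∑ a, ∑ b, G a b := by
    rw [h1 (fun a => ∑ b, H a b)]
    have : ∀ a, ∑ b, H (σ * a) b = ∑ b, H (σ * a) (ρ * b) :=
      fun a => h2 (fun b => H (σ * a) b)
    simp only [this, hHG, ← Finset.mul_sum]
  have hGsum : ∑ a, ∑ b, G a b = (sg σ * sg ρ) * ∑ a, ∑ b, H a b := by
    rw [hsum, ← mul_assoc]
    have : sg σ * sg ρ * (sg σ * sg ρ) = 1 := by
      have h1 := sg_sq σ; have h2 := sg_sq ρ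
      nlinarith [sg_sq σ, sg_sq ρ]
    rw [show sg σ * sg ρ * (sg σ * sg ρ) * ∑ a, ∑ b, G a b = (sg σ * sg ρ * (sg σ * sg ρ)) * ∑ a, ∑ b, G a b from by ring, this, one_mul]
  rw [hL, hR, hGsum]
  ring

lemma snoc_comp_pex {p : ℕ} (i : Fin p → Fin n) (t : Fin n) (σ : Perm (Fin p)) (s' : Fin (p+1)) :
    (Fin.snoc (fun s => i (σ s)) t : Fin (p+1) → Fin n) s'
    = (Fin.snoc i t : Fin (p+1) → Fin n) (pex σ s') := by
  induction s' using Fin.lastCases with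
  | last => rw [pex_last]; simp
  | cast s => rw [pex_castSucc]; simp

lemma Sg_Ct {p q : ℕ} (M : T n (p+1) (q+1)) (hM : Sg M) : Sg (Ct M) := by
  intro σ ρ i j
  unfold Ct
  have : ∀ t : Fin n,
      M (Fin.snoc (fun s => i (σ s)) t) (Fin.snoc (fun s => j (ρ s)) t)
      = sg σ * sg ρ * M (Fin.snoc i t) (Fin.snoc j t) := by
    intro t
    have harg1 : (Fin.snoc (fun s => i (σ s)) t : Fin (p+1) → Fin n)
        = fun s' => (Fin.snoc i t : Fin (p+1) → Fin n) (pex σ s') :=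
      funext fun s' => snoc_comp_pex i t σ s'
    have harg2 : (Fin.snoc (fun s => j (ρ s)) t : Fin (q+1) → Fin n)
        = fun s' => (Fin.snoc j t : Fin (q+1) → Fin n) (pex ρ s') :=
      funext fun s' => snoc_comp_pex j t ρ s'
    rw [harg1, harg2, hM (pex σ) (pex ρ) (Fin.snoc i t) (Fin.snoc j t), sg_pex, sg_pex]
  simp only [this]
  rw [← Finset.mul_sum]

lemma tupA {p : ℕ} (i : Fin p → Fin n) (t : Fin n) :
    (fun s => (Fin.snoc i t : Fin (p+1) → Fin n) (Equiv.swap (Fin.last p) (Fin.last p) (Fin.castSucc s))) = i := by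
  funext s
  rw [Equiv.swap_self]
  simp

lemma tupB {p : ℕ} (i : Fin p → Fin n) (t : Fin n) (m : Fin p) :
    (fun s => (Fin.snoc i t : Fin (p+1) → Fin n) (Equiv.swap (Fin.castSucc m) (Fin.last p) (Fin.castSucc s)))
    = Function.update i m t := by
  funext s
  by_cases h : s = m
  · subst h
    rw [Equiv.swap_apply_left]
    simp
  · have h1 : Fin.castSucc s ≠ Fin.castSucc m := by simpa [Fin.castSucc_inj] using h
    have h2 : Fin.castSucc s ≠ Fin.last p := (Fin.castSucc_lt_last s).ne
    rw [Equiv.swap_apply_of_ne_of_ne h1 h2]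
    simp [Function.update_of_ne h]

lemma tupC {p : ℕ} (i : Fin (p+1) → Fin n) (t : Fin n) (m : Fin (p+1)) (s' : Fin (p+1)) :
    (Fin.snoc (fun s => i (Equiv.swap m (Fin.last p) (Fin.castSucc s))) t : Fin (p+1) → Fin n) s'
    = Function.update i m t (Equiv.swap m (Fin.last p) s') := by
  induction s' using Fin.lastCases with
  | last =>
    rw [Equiv.swap_apply_right]
    simp
  | cast s =>
    simp only [Fin.snoc_castSucc]
    by_cases hm : m = Fin.last p
    · subst hm
      rw [Equiv.swap_self]
      simp only [Equiv.refl_apply]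
      rw [Function.update_of_ne (Fin.castSucc_lt_last s).ne]
    · by_cases h : Fin.castSucc s = m
      · rw [h, Equiv.swap_apply_left, Function.update_of_ne (Ne.symm hm)]
      · have h2 : Fin.castSucc s ≠ Fin.last p := (Fin.castSucc_lt_last s).ne
        rw [Equiv.swap_apply_of_ne_of_ne h h2, Function.update_of_ne h]


lemma C1 {p q : ℕ} (M : T n p q) (hM : Sg M) (i : Fin p → Fin n) (j : Fin q → Fin n) :
    Ct (Gm M) i j = ((n:ℝ) - p - q) * M i j + Xc M i j := by
  set E : Fin n → Fin (p+1) → Fin (q+1) → ℝ := fun t m l =>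
    sg (Equiv.swap m (Fin.last p)) * sg (Equiv.swap l (Fin.last q)) *
      M (fun s => (Fin.snoc i t : Fin (p+1) → Fin n) (Equiv.swap m (Fin.last p) (Fin.castSucc s)))
        (fun s => (Fin.snoc j t : Fin (q+1) → Fin n) (Equiv.swap l (Fin.last q) (Fin.castSucc s))) *
      (if (Fin.snoc i t : Fin (p+1) → Fin n) m = (Fin.snoc j t : Fin (q+1) → Fin n) l then 1 else 0)
    with hE
  have step1 : Ct (Gm M) i j = ∑ t : Fin n, ∑ m : Fin (p+1), ∑ l : Fin (q+1), E t m l :=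
    Finset.sum_congr rfl fun t _ => GmAlt M hM _ _
  rw [step1, Finset.sum_comm]
  have step2 : ∀ m : Fin (p+1), ∑ t : Fin n, ∑ l : Fin (q+1), E t m l
      = ∑ l : Fin (q+1), ∑ t : Fin n, E t m l := fun m => Finset.sum_comm
  simp only [step2]
  -- block evaluations
  have blkLL : ∑ t : Fin n, E t (Fin.last p) (Fin.last q) = (n : ℝ) * M i j := by
    have : ∀ t : Fin n, E t (Fin.last p) (Fin.last q) = M i j := by
      intro t
      rw [hE]
      simp only [sg_swap_self, tupA, Fin.snoc_last]
      simp
    simp only [this, Finset.sum_const, card_univ, Fintype.card_fin, nsmul_eq_mul]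
  have blkLC : ∀ l' : Fin q, ∑ t : Fin n, E t (Fin.last p) (Fin.castSucc l') = -(M i j) := by
    intro l'
    have : ∀ t : Fin n, E t (Fin.last p) (Fin.castSucc l')
        = if t = j l' then -(M i (Function.update j l' t)) else 0 := by
      intro t
      rw [hE]
      simp only [sg_swap_self, sg_swap_ne (Fin.castSucc_lt_last l').ne, tupA, tupB,
        Fin.snoc_last, Fin.snoc_castSucc]
      by_cases h : t = j l'
      · rw [if_pos h, if_pos h]; ring
      · rw [if_neg h, if_neg h]; ring
    simp only [this]
    rw [Finset.sum_ite_eq' Finset.univ (j l')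
      (fun t => -(M i (Function.update j l' t)))]
    simp [Function.update_eq_self]
  have blkCL : ∀ m' : Fin p, ∑ t : Fin n, E t (Fin.castSucc m') (Fin.last q) = -(M i j) := by
    intro m'
    have : ∀ t : Fin n, E t (Fin.castSucc m') (Fin.last q)
        = if i m' = t then -(M (Function.update i m' t) j) else 0 := by
      intro t
      rw [hE]
      simp only [sg_swap_self, sg_swap_ne (Fin.castSucc_lt_last m').ne, tupA, tupB,
        Fin.snoc_last, Fin.snoc_castSucc]
      by_cases h : i m' = t
      · rw [if_pos h, if_pos h]; ring
      · rw [if_neg h, if_neg h]; ring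
    simp only [this]
    rw [Finset.sum_ite_eq]
    simp [Function.update_eq_self]
  have blkCC : ∀ (m' : Fin p) (l' : Fin q), ∑ t : Fin n, E t (Fin.castSucc m') (Fin.castSucc l')
      = if i m' = j l' then (∑ t : Fin n, M (Function.update i m' t) (Function.update j l' t)) else 0 := by
    intro m' l'
    have : ∀ t : Fin n, E t (Fin.castSucc m') (Fin.castSucc l')
        = if i m' = j l' then M (Function.update i m' t) (Function.update j l' t) else 0 := by
      intro t
      rw [hE]
      simp only [sg_swap_ne (Fin.castSucc_lt_last m').ne, sg_swap_ne (Fin.castSucc_lt_last l').ne,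
        tupB, Fin.snoc_castSucc]
      by_cases h : i m' = j l'
      · rw [if_pos h, if_pos h]; ring
      · rw [if_neg h, if_neg h]; ring
    simp only [this]
    by_cases h : i m' = j l'
    · rw [if_pos h]; exact Finset.sum_congr rfl fun t _ => by rw [if_pos h]
    · rw [if_neg h]
      simp only [if_neg h, Finset.sum_const_zero]
  rw [Fin.sum_univ_castSucc (f := fun m => ∑ l : Fin (q+1), ∑ t : Fin n, E t m l)]
  have innerC : ∀ m' : Fin p, ∑ l : Fin (q+1), ∑ t : Fin n, E t (Fin.castSucc m') l
      = (∑ l' : Fin q, if i m' = j l'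
          then (∑ t : Fin n, M (Function.update i m' t) (Function.update j l' t)) else 0)
        - M i j := by
    intro m'
    rw [Fin.sum_univ_castSucc (f := fun l => ∑ t : Fin n, E t (Fin.castSucc m') l), blkCL m']
    simp only [blkCC m']
    ring
  have innerL : ∑ l : Fin (q+1), ∑ t : Fin n, E t (Fin.last p) l
      = (n : ℝ) * M i j - (q : ℝ) * M i j := by
    rw [Fin.sum_univ_castSucc (f := fun l => ∑ t : Fin n, E t (Fin.last p) l), blkLL]
    simp only [blkLC, Finset.sum_const, card_univ, Fintype.card_fin, nsmul_eq_mul]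
    ring
  simp only [innerC, innerL]
  rw [Finset.sum_sub_distrib, Finset.sum_const, card_univ, Fintype.card_fin]
  have hXc : Xc M i j = ∑ m' : Fin p, ∑ l' : Fin q,
      if i m' = j l' then (∑ t : Fin n, M (Function.update i m' t) (Function.update j l' t)) else 0 := rfl
  rw [hXc]
  simp only [nsmul_eq_mul]
  ring

lemma L9 {p q : ℕ} (M : T n (p+1) (q+1)) (hM : Sg M) (i : Fin (p+1) → Fin n)
    (j : Fin (q+1) → Fin n) : Xc M i j = Gm (Ct M) i j := by
  rw [GmAlt (Ct M) (Sg_Ct M hM) i j]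
  have hXc : Xc M i j = ∑ m : Fin (p+1), ∑ l : Fin (q+1),
      if i m = j l then (∑ t : Fin n, M (Function.update i m t) (Function.update j l t)) else 0 := rfl
  rw [hXc]
  apply Finset.sum_congr rfl; intro m _
  apply Finset.sum_congr rfl; intro l _
  have hCt : Ct M (fun s => i (Equiv.swap m (Fin.last p) (Fin.castSucc s)))
      (fun s => j (Equiv.swap l (Fin.last q) (Fin.castSucc s)))
      = ∑ t : Fin n, sg (Equiv.swap m (Fin.last p)) * sg (Equiv.swap l (Fin.last q)) *
          M (Function.update i m t) (Function.update j l t) := by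
    unfold Ct
    apply Finset.sum_congr rfl; intro t _
    have h1 : (Fin.snoc (fun s => i (Equiv.swap m (Fin.last p) (Fin.castSucc s))) t : Fin (p+1) → Fin n)
        = fun s' => Function.update i m t (Equiv.swap m (Fin.last p) s') :=
      funext fun s' => tupC i t m s'
    have h2 : (Fin.snoc (fun s => j (Equiv.swap l (Fin.last q) (Fin.castSucc s))) t : Fin (q+1) → Fin n)
        = fun s' => Function.update j l t (Equiv.swap l (Fin.last q) s') :=
      funext fun s' => tupC j t l s'
    rw [h1, h2]
    exact hM (Equiv.swap m (Fin.last p)) (Equiv.swap l (Fin.last q))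
      (Function.update i m t) (Function.update j l t)
  rw [hCt]
  have hsq : ∀ t : Fin n,
      sg (Equiv.swap m (Fin.last p)) * sg (Equiv.swap l (Fin.last q)) *
        (sg (Equiv.swap m (Fin.last p)) * sg (Equiv.swap l (Fin.last q)) *
          M (Function.update i m t) (Function.update j l t))
      = M (Function.update i m t) (Function.update j l t) := by
    intro t
    have h1 := sg_sq (Equiv.swap m (Fin.last p))
    have h2 := sg_sq (Equiv.swap l (Fin.last q))
    calc sg (Equiv.swap m (Fin.last p)) * sg (Equiv.swap l (Fin.last q)) *
        (sg (Equiv.swap m (Fin.last p)) * sg (Equiv.swap l (Fin.last q)) *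
          M (Function.update i m t) (Function.update j l t))
        = (sg (Equiv.swap m (Fin.last p)) * sg (Equiv.swap m (Fin.last p))) *
          ((sg (Equiv.swap l (Fin.last q)) * sg (Equiv.swap l (Fin.last q))) *
            M (Function.update i m t) (Function.update j l t)) := by ring
      _ = M (Function.update i m t) (Function.update j l t) := by rw [h1, h2]; ring
  by_cases h : i m = j l
  · rw [if_pos h, if_pos h, mul_one, Finset.mul_sum]
    exact Finset.sum_congr rfl fun t _ => (hsq t).symm
  · rw [if_neg h, if_neg h, mul_zero]


noncomputable def GmIter {p q : ℕ} : (k : ℕ) → T n p q → T n (p+k) (q+k)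
  | 0, M => M
  | k+1, M => Gm (GmIter k M)

lemma Sg_GmIter {p q : ℕ} (k : ℕ) (M : T n p q) (hM : Sg M) : Sg (GmIter k M) := by
  cases k with
  | zero => exact hM
  | succ k => exact Sg_Gm _

lemma Gm_zero {p q : ℕ} : Gm (fun _ _ => (0:ℝ) : T n p q) = fun _ _ => 0 := by
  funext i j
  unfold Gm
  simp

lemma GmIter_zero {p q : ℕ} (k : ℕ) : GmIter k (fun _ _ => (0:ℝ) : T n p q) = fun _ _ => 0 := by
  induction k with
  | zero => rfl
  | succ k ih =>
    show Gm (GmIter k (fun _ _ => (0:ℝ) : T n p q)) = _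
    rw [ih, Gm_zero]
    rfl

lemma Gm_lin {p q : ℕ} (a : ℝ) (A B : T n p q) :
    Gm (fun i j => a * A i j + B i j) = fun i j => a * Gm A i j + Gm B i j := by
  funext i j
  unfold Gm
  have key : ∀ σ : Perm (Fin (p+1)), ∀ ρ : Perm (Fin (q+1)),
      sg σ * sg ρ *
        ((fun i' j' => a * A i' j' + B i' j') (fun s => i (σ (Fin.castSucc s)))
          (fun s => j (ρ (Fin.castSucc s)))) *
        (if i (σ (Fin.last p)) = j (ρ (Fin.last q)) then 1 else 0)
      = a * (sg σ * sg ρ * A (fun s => i (σ (Fin.castSucc s))) (fun s => j (ρ (Fin.castSucc s))) *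
          (if i (σ (Fin.last p)) = j (ρ (Fin.last q)) then 1 else 0))
        + (sg σ * sg ρ * B (fun s => i (σ (Fin.castSucc s))) (fun s => j (ρ (Fin.castSucc s))) *
          (if i (σ (Fin.last p)) = j (ρ (Fin.last q)) then 1 else 0)) := by
    intro σ ρ
    simp only []
    ring
  simp only [key, Finset.sum_add_distrib, ← Finset.mul_sum]
  ring

def TreIx {a b a' b' : ℕ} (ha : a = a') (hb : b = b') (M : T n a b) : T n a' b' :=
  fun i j => M (fun s => i (Fin.cast ha s)) (fun s => j (Fin.cast hb s))

lemma TreIx_self {a b : ℕ} (ha : a = a) (hb : b = b) (M : T n a b) : TreIx ha hb M = M := by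
  funext i j
  unfold TreIx
  have h1 : (fun s => i (Fin.cast ha s)) = i := funext fun s => congrArg i (Fin.ext (by simp))
  have h2 : (fun s => j (Fin.cast hb s)) = j := funext fun s => congrArg j (Fin.ext (by simp))
  rw [h1, h2]

lemma TreIx_Gm {a b a' b' : ℕ} (ha : a = a') (hb : b = b') (ha' : a+1 = a'+1) (hb' : b+1 = b'+1)
    (M : T n a b) : Gm (TreIx ha hb M) = TreIx ha' hb' (Gm M) := by
  subst ha; subst hb
  rw [TreIx_self, TreIx_self]

lemma TreIx_eq_zero {a b a' b' : ℕ} (ha : a = a') (hb : b = b') (M : T n a b)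
    (h : TreIx ha hb M = fun _ _ => 0) : M = fun _ _ => 0 := by
  subst ha; subst hb
  rwa [TreIx_self] at h

lemma GmIter_Gm {a b : ℕ} (k : ℕ) (Y : T n a b) (h1 : a+(k+1) = a+1+k) (h2 : b+(k+1) = b+1+k) :
    GmIter k (Gm Y) = TreIx h1 h2 (GmIter (k+1) Y) := by
  induction k with
  | zero => rw [TreIx_self]; rfl
  | succ k ih =>
    show Gm (GmIter k (Gm Y)) = _
    rw [ih (by omega) (by omega), TreIx_Gm _ _ (by omega) (by omega)]
    rfl

lemma Xc_degenerate {p q : ℕ} (h : p = 0 ∨ q = 0) (M : T n p q) : Xc M = fun _ _ => 0 := by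
  funext i j
  unfold Xc
  rcases h with h | h <;> subst h <;> simp

lemma Ct_zero {p q : ℕ} : Ct (fun _ _ => (0:ℝ) : T n (p+1) (q+1)) = fun _ _ => 0 := by
  funext i j
  unfold Ct
  simp

lemma C3 {p q : ℕ} (M : T n p q) (hM : Sg M) : ∀ j : ℕ,
    Ct (GmIter (j+1) M) = fun i l =>
      ((j+1 : ℝ) * (((n:ℝ) - p - q) - j)) * GmIter j M i l + GmIter j (Xc M) i l := by
  intro j
  induction j with
  | zero =>
    funext i l
    show Ct (Gm M) i l = _
    rw [C1 M hM i l]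
    simp only [show GmIter 0 M = M from rfl, show GmIter 0 (Xc M) = Xc M from rfl]
    push_cast
    ring
  | succ j ih =>
    funext i l
    show Ct (Gm (GmIter (j+1) M)) i l = _
    rw [C1 (GmIter (j+1) M) (Sg_GmIter (j+1) M hM) i l]
    have hL9 : Xc (GmIter (j+1) M) i l = Gm (Ct (GmIter (j+1) M)) i l :=
      L9 (GmIter (j+1) M) (Sg_GmIter (j+1) M hM) i l
    rw [hL9, ih,
      Gm_lin ((j+1 : ℝ) * (((n:ℝ) - p - q) - j)) (GmIter j M) (GmIter j (Xc M))]
    have e1 : Gm (GmIter j M) i l = GmIter (j+1) M i l := rfl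
    have e2 : Gm (GmIter j (Xc M)) i l = GmIter (j+1) (Xc M) i l := rfl
    simp only [e1, e2]
    push_cast
    ring


lemma main_T : ∀ N p q k : ℕ, p + q + k = N → p + q + k ≤ n →
    ∀ M : T n p q, Sg M → GmIter k M = (fun _ _ => 0) → M = fun _ _ => 0 := by
  intro N
  induction N using Nat.strong_induction_on with
  | _ N ih =>
    intro p q k hN hle M hSg hz
    match k, hN with
    | 0, hN => exact hz
    | (k'+1), hN =>
      have hC3 := C3 M hSg k'
      have hCtz : Ct (GmIter (k'+1) M) = (fun _ _ => 0 : T n (p+k') (q+k')) := by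
        rw [hz]; exact Ct_zero
      have hE : (fun i l => ((k'+1 : ℝ) * (((n:ℝ) - p - q) - k')) * GmIter k' M i l
          + GmIter k' (Xc M) i l) = (fun _ _ => 0 : T n (p+k') (q+k')) := hC3.symm.trans hCtz
      have hcoef : (0:ℝ) < ((k'+1 : ℝ) * (((n:ℝ) - p - q) - k')) := by
        have hnat : p + q + (k'+1) ≤ n := hle
        have hc : ((p+q+(k'+1) : ℕ) : ℝ) ≤ (n:ℝ) := Nat.cast_le.mpr hnat
        push_cast at hc
        have h1 : (1:ℝ) ≤ ((n:ℝ) - p - q) - k' := by linarith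
        have h2 : (0:ℝ) < (k' : ℝ) + 1 := by positivity
        nlinarith
      by_cases hdeg : p = 0 ∨ q = 0
      · have hXc0 : Xc M = fun _ _ => 0 := Xc_degenerate hdeg M
        rw [hXc0, GmIter_zero] at hE
        have hGk' : GmIter k' M = (fun _ _ => 0 : T n (p+k') (q+k')) := by
          funext i l
          have h3 := congrFun (congrFun hE i) l
          simp only [add_zero] at h3
          rcases mul_eq_zero.mp h3 with h | h
          · exact absurd h (ne_of_gt hcoef)
          · exact h
        exact ih (p+q+k') (by omega) p q k' rfl (by omega) M hSg hGk'
      · push_neg at hdeg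
        obtain ⟨p', rfl⟩ : ∃ p', p = p'+1 := ⟨p-1, by omega⟩
        obtain ⟨q', rfl⟩ : ∃ q', q = q'+1 := ⟨q-1, by omega⟩
        have hX : Xc M = Gm (Ct M) := funext fun i => funext fun l => L9 M hSg i l
        have h2 := congrArg Gm hE
        rw [Gm_zero] at h2
        rw [Gm_lin ((k'+1 : ℝ) * (((n:ℝ) - (p'+1:ℕ) - (q'+1:ℕ)) - k'))
          (GmIter k' M) (GmIter k' (Xc M))] at h2
        have hz' : Gm (GmIter k' M)
            = (fun _ _ => 0 : T n (p'+1+(k'+1)) (q'+1+(k'+1))) := hz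
        rw [hz'] at h2
        have hXzero : Gm (GmIter k' (Xc M))
            = (fun _ _ => (0:ℝ) : T n (p'+1+k'+1) (q'+1+k'+1)) := by
          funext i l
          have h3 := congrFun (congrFun h2 i) l
          simp only [mul_zero, zero_add] at h3
          exact h3
        rw [hX] at hXzero
        rw [GmIter_Gm k' (Ct M) (by omega) (by omega),
          TreIx_Gm _ _ (by omega) (by omega)] at hXzero
        have hCtPow : Gm (GmIter (k'+1) (Ct M)) = fun _ _ => 0 :=
          TreIx_eq_zero _ _ _ hXzero
        have hCt0 : Ct M = fun _ _ => 0 :=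
          ih (p'+q'+(k'+2)) (by omega) p' q' (k'+2) rfl (by omega) (Ct M) (Sg_Ct M hSg) hCtPow
        rw [hCt0, Gm_zero] at hX
        rw [hX, GmIter_zero] at hE
        have hGk' : GmIter k' M = (fun _ _ => 0 : T n (p'+1+k') (q'+1+k')) := by
          funext i l
          have h3 := congrFun (congrFun hE i) l
          simp only [add_zero] at h3
          rcases mul_eq_zero.mp h3 with h | h
          · exact absurd h (ne_of_gt hcoef)
          · exact h
        exact ih ((p'+1)+(q'+1)+k') (by omega) (p'+1) (q'+1) k' rfl (by omega) M hSg hGk'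


noncomputable def Rr {p q : ℕ} (ω : DF n p q) : T n p q :=
  fun i j => ω (fun a => stdB (i a)) (fun b => stdB (j b))

lemma inner_stdB (a b : Fin n) : (inner ℝ (stdB a) (stdB b) : ℝ) = if a = b then 1 else 0 := by
  unfold stdB
  rw [EuclideanSpace.inner_single_left]
  simp [EuclideanSpace.single_apply, eq_comm]

lemma castAdd_one_eq_castSucc (p : ℕ) : ∀ s : Fin p, Fin.castAdd 1 s = Fin.castSucc s :=
  fun _ => rfl

lemma R_KN_gF {p q : ℕ} (θ : DF n p q) : Rr (KN θ (gF n)) = Gm (Rr θ) := by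
  funext i j
  simp only [Rr, KN, Gm, gF, sg, Nat.factorial_one, mul_one, inner_stdB,
    castAdd_one_eq_castSucc,
    show Fin.natAdd p (0 : Fin 1) = Fin.last p from (last_eq_natAdd p).symm,
    show Fin.natAdd q (0 : Fin 1) = Fin.last q from (last_eq_natAdd q).symm]

lemma R_gmulIter {p q : ℕ} (ω : DF n p q) : ∀ k : ℕ, Rr (gmulIter k ω) = GmIter k (Rr ω)
  | 0 => rfl
  | (k+1) => by
    show Rr (KN (gmulIter k ω) (gF n)) = Gm (GmIter k (Rr ω))
    rw [R_KN_gF, R_gmulIter ω k]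

lemma Sg_R {p q : ℕ} (ω : DF n p q) (h : IsDF ω) : Sg (Rr ω) := by
  obtain ⟨A, hA⟩ := h
  intro σ ρ i j
  show ω (fun a => stdB (i (σ a))) (fun b => stdB (j (ρ b))) = _
  rw [hA]
  have h1 : (fun a => stdB (i (σ a))) = (fun a => stdB (i a)) ∘ σ := rfl
  rw [h1, A.map_perm (fun a => stdB (i a)) σ, AlternatingMap.smul_apply]
  have h2 : (fun b => stdB (j (ρ b))) = (fun b => stdB (j b)) ∘ ρ := rfl
  rw [h2, (A (fun a => stdB (i a))).map_perm (fun b => stdB (j b)) ρ]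
  have h3 : Rr ω i j = A (fun a => stdB (i a)) (fun b => stdB (j b)) := hA _ _
  rw [h3]
  simp only [Units.smul_def, zsmul_eq_mul, sg]
  ring

lemma Sg_sub {p q : ℕ} (M₁ M₂ : T n p q) (h1 : Sg M₁) (h2 : Sg M₂) :
    Sg (fun i j => M₁ i j - M₂ i j) := by
  intro σ ρ i j
  simp only []
  rw [h1 σ ρ i j, h2 σ ρ i j]
  ring

lemma Gm_sub {p q : ℕ} (A B : T n p q) :
    Gm (fun i j => A i j - B i j) = fun i j => Gm A i j - Gm B i j := by
  have := Gm_lin (-1 : ℝ) B A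
  funext i j
  have h1 : (fun i j => (-1 : ℝ) * B i j + A i j) = fun i j => A i j - B i j := by
    funext i j; ring
  rw [h1] at this
  rw [this]
  ring

lemma GmIter_sub {p q : ℕ} (k : ℕ) (A B : T n p q) :
    GmIter k (fun i j => A i j - B i j) = fun i j => GmIter k A i j - GmIter k B i j := by
  induction k with
  | zero => rfl
  | succ k ih =>
    show Gm (GmIter k (fun i j => A i j - B i j)) = _
    rw [ih, Gm_sub]
    rfl

-- basis expansion machinery
lemma stdB_expand (x : V n) : x = ∑ b : Fin n, x b • stdB b := by
  ext c
  rw [WithLp.ofLp_sum, Finset.sum_apply]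
  simp [stdB, EuclideanSpace.single_apply]

lemma alt_sum_apply {q : ℕ} {ι : Type*} (s : Finset ι) (F : ι → AlternatingMap ℝ (V n) ℝ (Fin q))
    (y : Fin q → V n) : (∑ i ∈ s, F i) y = ∑ i ∈ s, F i y := by
  induction s using Finset.cons_induction with
  | empty => rfl
  | cons a s ha ih => rw [Finset.sum_cons, Finset.sum_cons, AlternatingMap.add_apply, ih]

lemma alt_expand {m : ℕ} {N : Type*} [AddCommMonoid N] [Module ℝ N]
    (C : AlternatingMap ℝ (V n) N (Fin m)) (x : Fin m → V n) :
    C x = ∑ f : Fin m → Fin n, (∏ a, x a (f a)) • C (fun a => stdB (f a)) := by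
  conv_lhs => rw [show x = (fun a => ∑ b : Fin n, x a b • stdB b) from
    funext fun a => stdB_expand (x a)]
  rw [show C (fun a => ∑ b : Fin n, x a b • stdB b)
      = C.toMultilinearMap (fun a => ∑ b : Fin n, x a b • stdB b) from rfl]
  rw [C.toMultilinearMap.map_sum (fun a b => x a b • stdB b)]
  exact Finset.sum_congr rfl fun f _ =>
    C.toMultilinearMap.map_smul_univ (fun a => x a (f a)) (fun a => stdB (f a))

lemma ext_basis {p q : ℕ}
    (A B : AlternatingMap ℝ (V n) (AlternatingMap ℝ (V n) ℝ (Fin q)) (Fin p))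
    (hb : ∀ (i : Fin p → Fin n) (j : Fin q → Fin n),
      A (fun a => stdB (i a)) (fun b => stdB (j b)) = B (fun a => stdB (i a)) (fun b => stdB (j b)))
    (x : Fin p → V n) (y : Fin q → V n) : A x y = B x y := by
  rw [alt_expand A x, alt_expand B x, alt_sum_apply, alt_sum_apply]
  apply Finset.sum_congr rfl
  intro f _
  rw [AlternatingMap.smul_apply, AlternatingMap.smul_apply]
  congr 1
  rw [alt_expand (A fun a => stdB (f a)) y, alt_expand (B fun a => stdB (f a)) y]
  apply Finset.sum_congr rfl
  intro g _
  rw [hb f g]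

end S1

/-- multiplication by `g^k` is injective on `D^{p,q}` when `p + q + k < n + 1`. -/
theorem stmt1 (n p q k : ℕ) (h : p + q + k < n + 1)
    (ω₁ ω₂ : DF n p q) (h₁ : IsDF ω₁) (h₂ : IsDF ω₂)
    (heq : gmulIter k ω₁ = gmulIter k ω₂) : ω₁ = ω₂ := by
  have hSg : S1.Sg (fun i j => S1.Rr ω₁ i j - S1.Rr ω₂ i j) :=
    S1.Sg_sub _ _ (S1.Sg_R ω₁ h₁) (S1.Sg_R ω₂ h₂)
  have hGm : S1.GmIter k (fun i j => S1.Rr ω₁ i j - S1.Rr ω₂ i j) = fun _ _ => 0 := by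
    rw [S1.GmIter_sub, ← S1.R_gmulIter, ← S1.R_gmulIter, heq]
    funext i j
    simp
  have hM0 := S1.main_T (p+q+k) p q k rfl (by omega) _ hSg hGm
  have hbasis : ∀ (i : Fin p → Fin n) (j : Fin q → Fin n),
      ω₁ (fun a => stdB (i a)) (fun b => stdB (j b))
      = ω₂ (fun a => stdB (i a)) (fun b => stdB (j b)) := by
    intro i j
    have h5 := congrFun (congrFun hM0 i) j
    exact sub_eq_zero.mp h5
  obtain ⟨A, hA⟩ := h₁
  obtain ⟨B, hB⟩ := h₂
  funext x y
  rw [hA, hB]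
  exact S1.ext_basis A B (fun i j => by
    have h6 := hbasis i j
    rwa [hA, hB] at h6) x y
end
end

section
/- If an algebraic curvature tensor R on a Euclidean vector space of dimension n ≥ 4 is Einstein (its Ricci contraction cR is proportional to the metric g), then its second Gauss-Bonnet-Weyl curvature satisfies h_4 ≥ 0, with h_4 = 0 if and only if R = 0. -/
open scoped BigOperators

noncomputable section

lemma aux_inner_stdB {n : ℕ} (a b : Fin n) :
    (inner ℝ (stdB a) (stdB b) : ℝ) = if a = b then 1 else 0 := by
  simp [stdB, EuclideanSpace.inner_single_left, EuclideanSpace.single_apply, eq_comm]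

lemma aux_zero_of_basis {n : ℕ} {R : DF n 2 2} (hR : IsDF R)
    (h0 : ∀ i j : Fin 2 → Fin n, R (fun a => stdB (i a)) (fun b => stdB (j b)) = 0) :
    ∀ x y, R x y = 0 := by
  obtain ⟨A, hA⟩ := hR
  have hstd : ∀ i : Fin n, (EuclideanSpace.basisFun (Fin n) ℝ).toBasis i = stdB i := by
    intro i; simp [stdB, EuclideanSpace.basisFun_apply]
  have hA0 : A = 0 := by
    refine Module.Basis.ext_alternating (EuclideanSpace.basisFun (Fin n) ℝ).toBasis (fun v _ => ?_)
    simp only [AlternatingMap.zero_apply]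
    refine Module.Basis.ext_alternating (EuclideanSpace.basisFun (Fin n) ℝ).toBasis (fun w _ => ?_)
    simp only [AlternatingMap.zero_apply, hstd]
    rw [← hA]
    exact h0 v w
  intro x y
  rw [hA, hA0]
  simp

lemma aux_sum_fun_one {n : ℕ} (f : (Fin 1 → Fin n) → ℝ) :
    ∑ i : Fin 1 → Fin n, f i = ∑ a : Fin n, f (fun _ => a) := by
  refine Fintype.sum_equiv (Equiv.funUnique (Fin 1) (Fin n)) _ _ (fun i => ?_)
  congr 1
  exact funext fun b => congrArg i (Subsingleton.elim b default)

/-- an Einstein algebraic curvature tensor in dimension `n ≥ 4` has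
`h₄ ≥ 0`, with `h₄ = 0` iff `R = 0`. -/
theorem stmt11 (n : ℕ) (hn : 4 ≤ n) (R : DF n 2 2)
    (hR : IsDF R) (hs : IsSymmDF R) (hb : FB R)
    (hEinstein : ∃ l : ℝ, ∀ x y, contrA R x y = l * gF n x y) :
    0 ≤ innerDF R R - innerDF (contrA R) (contrA R) +
        (1 / 4) * innerDF (contrIter 2 (p := 0) (q := 0) R) (contrIter 2 (p := 0) (q := 0) R) ∧
      (innerDF R R - innerDF (contrA R) (contrA R) +
        (1 / 4) * innerDF (contrIter 2 (p := 0) (q := 0) R) (contrIter 2 (p := 0) (q := 0) R) = 0 ↔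
        ∀ x y, R x y = 0) := by
  obtain ⟨l, hE⟩ := hEinstein
  have hn4 : (4 : ℝ) ≤ (n : ℝ) := by exact_mod_cast hn
  have hnn : (0 : ℝ) ≤ (n : ℝ) := by positivity
  have hQ : 0 ≤ innerDF R R := by
    rw [innerDF]
    refine mul_nonneg (by positivity) ?_
    exact Finset.sum_nonneg fun i _ => Finset.sum_nonneg fun j _ => mul_self_nonneg _
  -- contraction at level (1,1) agrees with contrA
  have hc1 : ∀ u v : Fin 1 → V n, contr (p := 1) (q := 1) R u v
      = l * (inner ℝ (u 0) (v 0) : ℝ) := by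
    intro u v
    have heq : contr (p := 1) (q := 1) R u v = contrA R u v := by
      rw [contrA, dif_pos (by omega : 1 ≤ 2 ∧ 1 ≤ 2)]
      rfl
    rw [heq, hE u v, gF]
  have hc2 : ∀ x y : Fin 0 → V n, contrIter 2 (p := 0) (q := 0) R x y = l * n := by
    intro x y
    show contr (contr R) x y = l * n
    rw [contr]
    have : ∀ i : Fin n, contr (p := 1) (q := 1) R (Fin.cons (stdB i) x) (Fin.cons (stdB i) y)
        = l := by
      intro i
      rw [hc1, Fin.cons_zero, Fin.cons_zero, aux_inner_stdB]
      simp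
    simp only [this, Finset.sum_const, Finset.card_univ, Fintype.card_fin, nsmul_eq_mul]
    ring
  have hT2 : innerDF (contrIter 2 (p := 0) (q := 0) R) (contrIter 2 (p := 0) (q := 0) R)
      = (l * n) ^ 2 := by
    rw [innerDF]
    rw [Fintype.sum_unique]
    rw [Fintype.sum_unique]
    rw [hc2]
    norm_num [Nat.factorial]
    ring
  have hT1 : innerDF (contrA R) (contrA R) = l ^ 2 * n := by
    rw [innerDF]
    simp only [hE, gF]
    rw [aux_sum_fun_one]
    have : ∀ a : Fin n, ∑ j : Fin 1 → Fin n,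
        (l * (inner ℝ ((fun _ => stdB a) (0 : Fin 1)) ((fun b => stdB (j b)) 0) : ℝ)) *
        (l * (inner ℝ ((fun _ => stdB a) (0 : Fin 1)) ((fun b => stdB (j b)) 0) : ℝ)) = l * l := by
      intro a
      rw [aux_sum_fun_one]
      simp only [aux_inner_stdB, mul_ite, ite_mul, mul_one, mul_zero, zero_mul]
      rw [Finset.sum_ite_eq]
      simp
    simp only [this, Finset.sum_const, Finset.card_univ, Fintype.card_fin, nsmul_eq_mul]
    norm_num [Nat.factorial]
    ring
  have key : 0 ≤ l ^ 2 * ((n : ℝ) * ((n : ℝ) - 4)) :=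
    mul_nonneg (sq_nonneg l) (mul_nonneg hnn (by linarith))
  rw [hT1, hT2]
  constructor
  · nlinarith [hQ, key]
  constructor
  · intro h
    have hQ0 : innerDF R R = 0 := by nlinarith [hQ, key]
    rw [innerDF] at hQ0
    have hfac : ((1 : ℝ) / ((Nat.factorial 2 * Nat.factorial 2 : ℕ) : ℝ)) ≠ 0 := by
      norm_num [Nat.factorial]
    have hS := (mul_eq_zero.mp hQ0).resolve_left hfac
    have h0 : ∀ i j : Fin 2 → Fin n,
        R (fun a => stdB (i a)) (fun b => stdB (j b)) = 0 := by
      intro i j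
      have h1 := (Finset.sum_eq_zero_iff_of_nonneg
        (fun i _ => Finset.sum_nonneg fun j _ => mul_self_nonneg _)).mp hS i (Finset.mem_univ i)
      have h2 := (Finset.sum_eq_zero_iff_of_nonneg
        (fun j _ => mul_self_nonneg _)).mp h1 j (Finset.mem_univ j)
      exact mul_self_eq_zero.mp h2
    exact aux_zero_of_basis hR h0
  · intro hz
    have hQz : innerDF R R = 0 := by
      rw [innerDF]; simp [hz]
    have hl : l = 0 := by
      have h1 := hE (fun _ => stdB ⟨0, by omega⟩) (fun _ => stdB ⟨0, by omega⟩)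
      rw [contrA, dif_pos (by omega : 1 ≤ 2 ∧ 1 ≤ 2)] at h1
      simp only [hz, Finset.sum_const_zero, gF] at h1
      rw [aux_inner_stdB] at h1
      simpa using h1.symm
    rw [hQz, hl]
    ring
end
end
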